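/- Under conditions (C1)–(C3), for every fixed n and every pair of distinct strata z ≠ z' in 𝒵, the conditional covariance of Ȳ_t(z) − Ȳ_s(z) and Ȳ_t(z') − Ȳ_s(z') given the σ-algebra 𝒟_n generated by (Z_1, …, Z_n, I_1, …, I_n) is zero almost surely; that is, E[(Ȳ_t(z) − Ȳ_s(z))(Ȳ_t(z') − Ȳ_s(z')) | 𝒟_n] = E[Ȳ_t(z) − Ȳ_s(z) | 𝒟_n] · E[Ȳ_t(z') − Ȳ_s(z') | 𝒟_n] a.s. -/

import Mathlib

open MeasureTheory ProbabilityTheory Filter Finset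
open scoped NNReal ProbabilityTheory Topology

/-!
𝒟ₙ is generated by the finitely-valued map ω ↦ (Z_i ω, I_i ω)_{i<n}, so the conditional
expectations are averages over its atoms `{Z = c} ∩ {I = b}`, and it suffices to show that the two
differences are uncorrelated under `P[|{Z = c} ∩ {I = b}]`. On such an atom they are fixed functions
of the data of the units in stratum `z` and in stratum `z'` respectively. By (C2), conditioning on
`{I = b}` as well does not change integrals of functions of the data under `P[|{Z = c}]`; and since
`{Z = c}` is a product event, the units remain independent under `P[|{Z = c}]`. As `z ≠ z'`, the two
groups of units are disjoint.
-/

section General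

variable {Ω : Type*} {m0 : MeasurableSpace Ω} {μ : Measure Ω}

lemma integral_eq_of_forall_measurableSet_eq {E : Type*} [NormedAddCommGroup E] [NormedSpace ℝ E]
    {ν : Measure Ω} {m : MeasurableSpace Ω} (hm : m ≤ m0)
    (h : ∀ s, MeasurableSet[m] s → μ s = ν s) {f : Ω → E} (hf : StronglyMeasurable[m] f) :
    ∫ x, f x ∂μ = ∫ x, f x ∂ν := by
  have htrim : μ.trim hm = ν.trim hm := by
    ext s hs
    rw [trim_measurableSet_eq hm hs, trim_measurableSet_eq hm hs, h s hs]
  rw [integral_trim hm hf, htrim, ← integral_trim hm hf]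

lemma biSup_comap_eq_comap_pi {ι β : Type*} [mβ : MeasurableSpace β] (s : Finset ι)
    (X : ι → Ω → β) :
    ⨆ i ∈ s, mβ.comap (X i)
      = MeasurableSpace.comap (fun ω (i : s) => X i ω) MeasurableSpace.pi := by
  rw [MeasurableSpace.comap_process_pi, iSup_subtype']

section Atoms

variable {α : Type*} {mα : MeasurableSpace α} {φ : Ω → α}

lemma ae_measure_preimage_singleton_ne_zero [Countable α] :
    ∀ᵐ ω ∂μ, μ (φ ⁻¹' {φ ω}) ≠ 0 := by
  refine ae_iff.2 <| measure_mono_null (fun ω hω => Set.mem_biUnion (x := φ ω)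
    (show μ (φ ⁻¹' {φ ω}) = 0 from not_not.1 hω) rfl)
    ((measure_biUnion_null_iff (Set.to_countable {a | μ (φ ⁻¹' {a}) = 0})).2 fun _ ha => ha)

lemma Filter.Eventually.of_measure_preimage_singleton_ne_zero {p : α → Prop}
    (h : ∀ᵐ ω ∂μ, p (φ ω)) {a : α} (ha : μ (φ ⁻¹' {a}) ≠ 0) : p a := by
  by_contra hpa
  exact ha <| measure_mono_null (fun ω (hω : φ ω = a) => show ¬p (φ ω) by rwa [hω])
    (ae_iff.1 h)

lemma measureReal_smul_integral_cond {E : Type*} [NormedAddCommGroup E] [NormedSpace ℝ E]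
    [IsFiniteMeasure μ] (s : Set Ω) (f : Ω → E) :
    μ.real s • ∫ x, f x ∂μ[|s] = ∫ x in s, f x ∂μ := by
  rcases eq_or_ne (μ s) 0 with hs | hs
  · simp [Measure.restrict_eq_zero.2 hs, measureReal_def, hs]
  · rw [ProbabilityTheory.cond, integral_smul_measure, smul_smul, ENNReal.toReal_inv,
      measureReal_def, mul_inv_cancel₀ (ENNReal.toReal_ne_zero.2 ⟨hs, measure_ne_top μ s⟩),
      one_smul]

lemma setIntegral_preimage_eq_sum [Finite α] [MeasurableSingletonClass α] (hφ : Measurable φ)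
    {f : Ω → ℝ} (hf : Integrable f μ) (S : Set α) :
    ∫ x in φ ⁻¹' S, f x ∂μ = ∑ a ∈ S.toFinite.toFinset, ∫ x in φ ⁻¹' {a}, f x ∂μ := by
  rw [← integral_biUnion_finset _ (fun a _ => hφ (measurableSet_singleton a))
    ((pairwise_disjoint_fiber φ).set_pairwise _) fun _ _ => hf.integrableOn]
  simp only [Set.Finite.mem_toFinset, Set.biUnion_preimage_singleton]

theorem condExp_comap_ae_eq_integral_cond [Finite α] [MeasurableSingletonClass α]
    [IsFiniteMeasure μ] (hφ : Measurable φ) {f : Ω → ℝ} (hf : Integrable f μ) :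
    μ[f | mα.comap φ] =ᵐ[μ] fun ω => ∫ x, f x ∂μ[|φ ⁻¹' {φ ω}] := by
  set c : α → ℝ := fun a => ∫ x, f x ∂μ[|φ ⁻¹' {a}]
  have hcφ : StronglyMeasurable[mα.comap φ] (c ∘ φ) :=
    ((measurable_of_finite c).comp (comap_measurable φ)).stronglyMeasurable
  have hcφ_int : Integrable (c ∘ φ) μ :=
    (Integrable.of_finite (μ := μ.map φ) (f := c)).comp_measurable hφ
  refine (ae_eq_condExp_of_forall_setIntegral_eq hφ.comap_le hf
    (fun _ _ _ => hcφ_int.integrableOn) ?_ hcφ.aestronglyMeasurable).symm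
  rintro _ ⟨S, -, rfl⟩ -
  rw [setIntegral_preimage_eq_sum hφ hcφ_int, setIntegral_preimage_eq_sum hφ hf]
  refine Finset.sum_congr rfl fun a _ => ?_
  rw [setIntegral_congr_fun (g := fun _ => c a) (hφ (measurableSet_singleton a))
    fun x (hx : φ x = a) => by simp only [Function.comp_apply, hx], setIntegral_const,
    measureReal_smul_integral_cond]

theorem condExp_comap_mul_ae_eq_of_forall_integral_cond [Finite α] [MeasurableSingletonClass α]
    [IsFiniteMeasure μ] (hφ : Measurable φ) {f g : α → Ω → ℝ}
    (hf : Integrable (fun ω => f (φ ω) ω) μ) (hg : Integrable (fun ω => g (φ ω) ω) μ)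
    (hfg : Integrable (fun ω => f (φ ω) ω * g (φ ω) ω) μ)
    (h : ∀ a, μ (φ ⁻¹' {a}) ≠ 0 → ∫ x, f a x * g a x ∂μ[|φ ⁻¹' {a}]
      = (∫ x, f a x ∂μ[|φ ⁻¹' {a}]) * ∫ x, g a x ∂μ[|φ ⁻¹' {a}]) :
    μ[fun ω => f (φ ω) ω * g (φ ω) ω | mα.comap φ] =ᵐ[μ] fun ω =>
      μ[fun ω => f (φ ω) ω | mα.comap φ] ω * μ[fun ω => g (φ ω) ω | mα.comap φ] ω := by
  have hfiber (u : α → Ω → ℝ) (a : α) :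
      ∫ x, u (φ x) x ∂μ[|φ ⁻¹' {a}] = ∫ x, u a x ∂μ[|φ ⁻¹' {a}] :=
    integral_congr_ae <| (ae_cond_mem (hφ (measurableSet_singleton a))).mono
      fun x (hx : φ x = a) => congrArg (fun b => u b x) hx
  filter_upwards [condExp_comap_ae_eq_integral_cond hφ hfg, condExp_comap_ae_eq_integral_cond hφ hf,
    condExp_comap_ae_eq_integral_cond hφ hg, ae_measure_preimage_singleton_ne_zero (φ := φ)]
    with ω hfgω hfω hgω hω
  rw [hfgω, hfω, hgω, hfiber (fun a x => f a x * g a x), hfiber f, hfiber g, h _ hω]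

lemma cond_inter_apply_eq_of_condExp_indicator_inter [Finite α] [MeasurableSingletonClass α]
    [IsFiniteMeasure μ] (hφ : Measurable φ) {B s : Set Ω} (hB : MeasurableSet B)
    (hs : MeasurableSet s)
    (h : μ[(B ∩ s).indicator fun _ => (1 : ℝ) | mα.comap φ] =ᵐ[μ] fun ω =>
      μ[B.indicator fun _ => (1 : ℝ) | mα.comap φ] ω
        * μ[s.indicator fun _ => (1 : ℝ) | mα.comap φ] ω)
    {a : α} (ha : μ (φ ⁻¹' {a} ∩ B) ≠ 0) :
    μ[s | φ ⁻¹' {a} ∩ B] = μ[s | φ ⁻¹' {a}] := by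
  have hatom : ∀ {E : Set Ω}, MeasurableSet E → μ[E.indicator fun _ => (1 : ℝ) | mα.comap φ]
      =ᵐ[μ] fun ω => ∫ x, E.indicator (fun _ => (1 : ℝ)) x ∂μ[|φ ⁻¹' {φ ω}] := fun hE =>
    condExp_comap_ae_eq_integral_cond hφ ((integrable_const (1 : ℝ)).indicator hE)
  have hindep : ∀ᵐ ω ∂μ, (μ[|φ ⁻¹' {φ ω}]).real (B ∩ s)
      = (μ[|φ ⁻¹' {φ ω}]).real B * (μ[|φ ⁻¹' {φ ω}]).real s := by
    filter_upwards [h, hatom (hB.inter hs), hatom hB, hatom hs] with ω hω hBsω hBω hsω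
    simpa only [hBsω, hBω, hsω, integral_indicator_const _ (hB.inter hs),
      integral_indicator_const _ hB, integral_indicator_const _ hs, smul_eq_mul, mul_one] using hω
  have hCa : μ (φ ⁻¹' {a}) ≠ 0 := fun h0 => ha (measure_mono_null Set.inter_subset_left h0)
  have hprod : μ[B ∩ s | φ ⁻¹' {a}] = μ[B | φ ⁻¹' {a}] * μ[s | φ ⁻¹' {a}] := by
    have := hindep.of_measure_preimage_singleton_ne_zero
      (p := fun b => (μ[|φ ⁻¹' {b}]).real (B ∩ s)
        = (μ[|φ ⁻¹' {b}]).real B * (μ[|φ ⁻¹' {b}]).real s) hCa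
    rwa [measureReal_def, measureReal_def, measureReal_def, ← ENNReal.toReal_mul,
      ENNReal.toReal_eq_toReal_iff' (measure_ne_top _ _)
        (ENNReal.mul_ne_top (measure_ne_top _ _) (measure_ne_top _ _))] at this
  have hB0 : μ[B | φ ⁻¹' {a}] ≠ 0 :=
    (cond_pos_of_inter_ne_zero (hφ (measurableSet_singleton a)) ha).ne'
  rw [← cond_cond_eq_cond_inter (hφ (measurableSet_singleton a)) hB, cond_apply hB, hprod,
    ← mul_assoc, ENNReal.inv_mul_cancel hB0 (measure_ne_top _ _), one_mul]

theorem integral_cond_inter_eq_of_condExp_indicator_inter [Finite α] [MeasurableSingletonClass α]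
    [IsFiniteMeasure μ] (hφ : Measurable φ) {B : Set Ω} (hB : MeasurableSet B)
    {m : MeasurableSpace Ω} (hm : m ≤ m0)
    (h : ∀ s, MeasurableSet[m] s → μ[(B ∩ s).indicator fun _ => (1 : ℝ) | mα.comap φ] =ᵐ[μ]
      fun ω => μ[B.indicator fun _ => (1 : ℝ) | mα.comap φ] ω
        * μ[s.indicator fun _ => (1 : ℝ) | mα.comap φ] ω)
    {a : α} (ha : μ (φ ⁻¹' {a} ∩ B) ≠ 0) {f : Ω → ℝ} (hf : StronglyMeasurable[m] f) :
    ∫ x, f x ∂μ[|φ ⁻¹' {a} ∩ B] = ∫ x, f x ∂μ[|φ ⁻¹' {a}] :=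
  integral_eq_of_forall_measurableSet_eq hm
    (fun s hs => cond_inter_apply_eq_of_condExp_indicator_inter hφ hB (hm s hs) (h s hs) ha) hf

end Atoms

section Independence

variable {ι β : Type*} [mβ : MeasurableSpace β] {X : ι → Ω → β}

lemma ProbabilityTheory.iIndepFun.cond_iInter_preimage [Finite ι] (hX : iIndepFun X μ)
    (hXm : ∀ i, Measurable (X i)) {s : ι → Set β} (hs : ∀ i, MeasurableSet (s i))
    (hμs : ∀ i, μ (X i ⁻¹' s i) ≠ 0) :
    iIndepFun X μ[|⋂ i, X i ⁻¹' s i] :=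
  iIndepFun.cond hXm (hX.comp (fun _ x => (x, x)) fun _ => measurable_id.prodMk measurable_id)
    hμs hs

lemma ProbabilityTheory.iIndepFun.integral_mul_of_measurable_biSup (hX : iIndepFun X μ)
    (hXm : ∀ i, Measurable (X i)) {S T : Set ι} (hST : Disjoint S T) {F G : Ω → ℝ}
    (hF : Measurable[⨆ i ∈ S, mβ.comap (X i)] F) (hG : Measurable[⨆ i ∈ T, mβ.comap (X i)] G) :
    ∫ x, F x * G x ∂μ = (∫ x, F x ∂μ) * ∫ x, G x ∂μ := by
  have hle (S : Set ι) : ⨆ i ∈ S, mβ.comap (X i) ≤ m0 := iSup₂_le fun i _ => (hXm i).comap_le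
  have hFG : IndepFun F G μ := (IndepFun_iff_Indep F G μ).2 <|
    indep_of_indep_of_le (indep_iSup_of_disjoint (fun i => (hXm i).comap_le)
      ((iIndepFun_iff_iIndep _ X μ).1 hX) hST) hF.comap_le hG.comap_le
  exact hFG.integral_mul_eq_mul_integral (hF.mono (hle S) le_rfl).aestronglyMeasurable
    (hG.mono (hle T) le_rfl).aestronglyMeasurable

/-- Conditioning on `B` as well is harmless for functions of the data by the conditional
independence `hCI`, and `Φ ⁻¹' {c}` is a product event, so the `X i` stay independent under
`μ[|Φ ⁻¹' {c}]`. -/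
theorem integral_mul_cond_preimage_inter_eq {ζ : Type*} [IsFiniteMeasure μ] [Finite ι]
    [MeasurableSpace ζ] [Finite ζ] [MeasurableSingletonClass ζ] (hX : iIndepFun X μ)
    (hXm : ∀ i, Measurable (X i)) {g : β → ζ} (hg : Measurable g) {Φ : Ω → ι → ζ}
    (hΦ : ∀ ω i, Φ ω i = g (X i ω)) {B : Set Ω} (hB : MeasurableSet B)
    (hCI : ∀ s, MeasurableSet[⨆ i, mβ.comap (X i)] s →
      μ[(B ∩ s).indicator fun _ => (1 : ℝ) | MeasurableSpace.comap Φ MeasurableSpace.pi] =ᵐ[μ]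
        fun ω => μ[B.indicator fun _ => (1 : ℝ) | MeasurableSpace.comap Φ MeasurableSpace.pi] ω
          * μ[s.indicator fun _ => (1 : ℝ) | MeasurableSpace.comap Φ MeasurableSpace.pi] ω)
    {c : ι → ζ} (hc : μ (Φ ⁻¹' {c} ∩ B) ≠ 0) {S T : Set ι} (hST : Disjoint S T) {F G : Ω → ℝ}
    (hF : Measurable[⨆ i ∈ S, mβ.comap (X i)] F) (hG : Measurable[⨆ i ∈ T, mβ.comap (X i)] G) :
    ∫ x, F x * G x ∂μ[|Φ ⁻¹' {c} ∩ B]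
      = (∫ x, F x ∂μ[|Φ ⁻¹' {c} ∩ B]) * ∫ x, G x ∂μ[|Φ ⁻¹' {c} ∩ B] := by
  have hΦm : Measurable Φ :=
    measurable_pi_iff.2 fun i => by simp_rw [hΦ]; exact hg.comp (hXm i)
  have hCeq : Φ ⁻¹' {c} = ⋂ i, X i ⁻¹' (g ⁻¹' {c i}) := by
    ext ω
    simp [funext_iff, hΦ]
  have hC : μ (Φ ⁻¹' {c}) ≠ 0 := fun h0 => hc (measure_mono_null Set.inter_subset_left h0)
  have hXC : iIndepFun X μ[|Φ ⁻¹' {c}] := hCeq ▸ hX.cond_iInter_preimage hXm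
    (fun i => hg (measurableSet_singleton _))
    fun i h0 => hC (measure_mono_null (hCeq ▸ Set.iInter_subset _ i) h0)
  have hle (S : Set ι) : ⨆ i ∈ S, mβ.comap (X i) ≤ ⨆ i, mβ.comap (X i) :=
    iSup₂_le fun i _ => le_iSup (fun i => mβ.comap (X i)) i
  have hdrop {f : Ω → ℝ} (hf : Measurable[⨆ i, mβ.comap (X i)] f) :
      ∫ x, f x ∂μ[|Φ ⁻¹' {c} ∩ B] = ∫ x, f x ∂μ[|Φ ⁻¹' {c}] :=
    integral_cond_inter_eq_of_condExp_indicator_inter hΦm hB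
      (iSup_le fun i => (hXm i).comap_le) hCI hc hf.stronglyMeasurable
  have hF' := hF.mono (hle S) le_rfl
  have hG' := hG.mono (hle T) le_rfl
  rw [hdrop (f := fun x => F x * G x) (hF'.mul hG'), hdrop hF', hdrop hG']
  exact hXC.integral_mul_of_measurable_biSup hXm hST hF hG

end Independence

section StratMean

variable {ι κ ζ : Type*} [Fintype ι] [DecidableEq κ] [DecidableEq ζ]

/-- The sample mean `Ȳ_t(z)` for the design in which unit `i` is in stratum `c i` and receives
treatment `b i` (`0` for an empty cell, as `x / 0 = 0`). -/
noncomputable def stratMean (Y : ι → κ → Ω → ℝ) (c : ι → ζ) (b : ι → κ) (t : κ) (z : ζ)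
    (ω : Ω) : ℝ :=
  (∑ i with b i = t ∧ c i = z, Y i t ω) / (#{i | b i = t ∧ c i = z} : ℝ)

lemma sum_ite_div_card_eq_stratMean (s : Finset ℕ) (Y : ℕ → κ → Ω → ℝ) (I : ℕ → Ω → κ)
    (Z : ℕ → Ω → ζ) (t : κ) (z : ζ) (ω : Ω) :
    (∑ i ∈ s, if I i ω = t ∧ Z i ω = z then Y i (I i ω) ω else 0)
        / (#(s.filter fun i => I i ω = t ∧ Z i ω = z) : ℝ)
      = stratMean (fun i : s => Y i) (fun i => Z i ω) (fun i => I i ω) t z ω := by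
  rw [stratMean, Finset.sum_filter, Finset.card_filter, Finset.card_filter]
  simp only [← Finset.sum_coe_sort s]
  congr 1
  refine Finset.sum_congr rfl fun i _ => ?_
  split_ifs with h
  · rw [h.1]
  · rfl

lemma abs_stratMean_le (Y : ι → κ → Ω → ℝ) (c : ι → ζ) (b : ι → κ) (t : κ) (z : ζ) (ω : Ω) :
    |stratMean Y c b t z ω| ≤ ∑ i, |Y i t ω| := by
  rw [stratMean, abs_div, Nat.abs_cast]
  calc |∑ i with b i = t ∧ c i = z, Y i t ω| / (#{i | b i = t ∧ c i = z} : ℝ)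
      ≤ |∑ i with b i = t ∧ c i = z, Y i t ω| := by
        rcases Nat.eq_zero_or_pos #{i | b i = t ∧ c i = z} with h | h
        · simp [h]
        · exact div_le_self (abs_nonneg _) (Nat.one_le_cast.2 h)
    _ ≤ ∑ i with b i = t ∧ c i = z, |Y i t ω| := Finset.abs_sum_le_sum_abs _ _
    _ ≤ ∑ i, |Y i t ω| :=
      Finset.sum_le_sum_of_subset_of_nonneg (Finset.filter_subset _ _) fun i _ _ => abs_nonneg _

lemma measurable_stratMean {m : ι → MeasurableSpace Ω} {Y : ι → κ → Ω → ℝ}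
    (hY : ∀ i t, Measurable[m i] (Y i t)) (c : ι → ζ) (b : ι → κ) (t : κ) (z : ζ) :
    Measurable[⨆ i ∈ {i | c i = z}, m i] (stratMean Y c b t z) :=
  (Finset.measurable_sum _ fun i hi =>
    (hY i t).mono (le_iSup₂ (f := fun i (_ : i ∈ {i | c i = z}) => m i) i
      (Finset.mem_filter.1 hi).2.2) le_rfl).div_const _

variable [MeasurableSpace κ] [MeasurableSpace ζ] [Countable κ] [Countable ζ]
  [MeasurableSingletonClass κ] [MeasurableSingletonClass ζ]

lemma measurable_stratMean_comp {Y : ι → κ → Ω → ℝ} (hY : ∀ i t, Measurable (Y i t))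
    {c : Ω → ι → ζ} {b : Ω → ι → κ} (hc : Measurable c) (hb : Measurable b) (t : κ) (z : ζ) :
    Measurable fun ω => stratMean Y (c ω) (b ω) t z ω :=
  (measurable_from_prod_countable_right (f := fun p : ((ι → ζ) × (ι → κ)) × Ω =>
      stratMean Y p.1.1 p.1.2 t z p.2)
    fun p => (measurable_stratMean hY p.1 p.2 t z).mono (iSup₂_le fun _ _ => le_rfl) le_rfl).comp
    ((hc.prodMk hb).prodMk measurable_id)

lemma memLp_stratMean_comp {p : ENNReal} {Y : ι → κ → Ω → ℝ}
    (hY : ∀ i t, Measurable (Y i t)) (hYp : ∀ i t, MemLp (Y i t) p μ)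
    {c : Ω → ι → ζ} {b : Ω → ι → κ} (hc : Measurable c) (hb : Measurable b) (t : κ) (z : ζ) :
    MemLp (fun ω => stratMean Y (c ω) (b ω) t z ω) p μ :=
  (memLp_finsetSum' _ fun i _ => (hYp i t).abs).of_le
    (measurable_stratMean_comp hY hc hb t z).aestronglyMeasurable <| ae_of_all _ fun ω =>
      (abs_stratMean_le Y (c ω) (b ω) t z ω).trans (by simpa using le_abs_self _)

end StratMean

end General

theorem stmt13_general {Ω : Type*} [MeasurableSpace Ω] (P : Measure Ω) [IsProbabilityMeasure P]
    {𝓦 : Type*} [MeasurableSpace 𝓦]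
    {𝓩 : Type*} [Fintype 𝓩] [DecidableEq 𝓩] [MeasurableSpace 𝓩] [MeasurableSingletonClass 𝓩]
    {k : ℕ}
    -- (C1): the i.i.d. sequence and its population version
    (Y : ℕ → Fin k → Ω → ℝ) (W : ℕ → Ω → 𝓦)
    (Ypop : Fin k → Ω → ℝ) (Wpop : Ω → 𝓦)
    (hYmeas : ∀ i t, Measurable (Y i t)) (hWmeas : ∀ i, Measurable (W i))
    (hYpopmeas : ∀ t, Measurable (Ypop t)) (hWpopmeas : Measurable Wpop)
    (hident : ∀ i, Measure.map (fun ω => ((fun t => Y i t ω), W i ω)) P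
        = Measure.map (fun ω => ((fun t => Ypop t ω), Wpop ω)) P)
    (hindep : iIndepFun
        (fun i ω => ((fun t => Y i t ω), W i ω)) P)
    (hY2 : ∀ t, MemLp (Ypop t) 2 P)
    -- strata
    (g : 𝓦 → 𝓩) (hg : Measurable g)
    (Z : ℕ → Ω → 𝓩) (hZdef : ∀ i ω, Z i ω = g (W i ω))
    -- treatment assignments and observed responses
    (I : ℕ → Ω → Fin k) (hImeas : ∀ i, Measurable (I i))
    (Yobs : ℕ → Ω → ℝ) (hYobs : ∀ i ω, Yobs i ω = Y i (I i ω) ω)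
    -- stratum/treatment counts
    (Ntz : ℕ → Fin k → 𝓩 → Ω → ℕ)
    (hNtz : ∀ n t z ω,
      Ntz n t z ω = ((range n).filter fun i => I i ω = t ∧ Z i ω = z).card)
    -- σ-algebras generated by the strata, the assignments, and the raw data
    (𝒢 σI σYW : ℕ → MeasurableSpace Ω)
    (h𝒢 : ∀ n, 𝒢 n = ⨆ i ∈ range n, MeasurableSpace.comap (Z i) inferInstance)
    (hσI : ∀ n, σI n = ⨆ i ∈ range n, MeasurableSpace.comap (I i) inferInstance)
    (hσYW : ∀ n, σYW n = ⨆ i ∈ range n,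
        MeasurableSpace.comap (fun ω => ((fun t => Y i t ω), W i ω)) inferInstance)
    -- (C2): conditional independence of assignments and data given the strata
    (hC2 : ∀ n (A B : Set Ω), MeasurableSet[σI n] A → MeasurableSet[σYW n] B →
        MeasureTheory.condExp (𝒢 n) P ((A ∩ B).indicator fun _ => (1 : ℝ))
          =ᵐ[P] fun ω =>
            MeasureTheory.condExp (𝒢 n) P (A.indicator fun _ => (1 : ℝ)) ω
              * MeasureTheory.condExp (𝒢 n) P (B.indicator fun _ => (1 : ℝ)) ω)
    -- the two fixed treatments and the average treatment effect
    (tt ss : Fin k)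
    -- stratified sample means and the stratified estimator
    (Ybar : ℕ → Fin k → 𝓩 → Ω → ℝ)
    (hYbar : ∀ n t z ω, Ybar n t z ω
      = (∑ i ∈ range n, if I i ω = t ∧ Z i ω = z then Yobs i ω else 0)
          / (Ntz n t z ω : ℝ))
    -- the σ-algebra generated by strata and assignments
    (𝒟 : ℕ → MeasurableSpace Ω) (h𝒟 : ∀ n, 𝒟 n = 𝒢 n ⊔ σI n) :
    ∀ n : ℕ, ∀ z z' : 𝓩, z ≠ z' →
      MeasureTheory.condExp (𝒟 n) P
          (fun ω => (Ybar n tt z ω - Ybar n ss z ω) * (Ybar n tt z' ω - Ybar n ss z' ω))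
        =ᵐ[P] fun ω =>
          MeasureTheory.condExp (𝒟 n) P (fun ω' => Ybar n tt z ω' - Ybar n ss z ω') ω
            * MeasureTheory.condExp (𝒟 n) P
                (fun ω' => Ybar n tt z' ω' - Ybar n ss z' ω') ω := by
  intro n z z' hzz'
  let X : ℕ → Ω → (Fin k → ℝ) × 𝓦 := fun i ω => ((fun t => Y i t ω), W i ω)
  let Φz : Ω → range n → 𝓩 := fun ω i => Z i ω
  let ΦI : Ω → range n → Fin k := fun ω i => I i ω
  have hXm (i : ℕ) : Measurable (X i) := (measurable_pi_iff.2 (hYmeas i)).prodMk (hWmeas i)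
  have hΦz : Measurable Φz := measurable_pi_iff.2 fun i => by
    simp_rw [Φz, hZdef]; exact hg.comp (hWmeas i)
  have hΦI : Measurable ΦI := measurable_pi_iff.2 fun i => hImeas i
  have h𝒢n : 𝒢 n = MeasurableSpace.comap Φz MeasurableSpace.pi :=
    (h𝒢 n).trans (biSup_comap_eq_comap_pi _ _)
  have hσIn : σI n = MeasurableSpace.comap ΦI MeasurableSpace.pi :=
    (hσI n).trans (biSup_comap_eq_comap_pi _ _)
  have hYL2 (i : ℕ) (t : Fin k) : MemLp (Y i t) 2 P :=
    ((IdentDistrib.mk (hXm i).aemeasurable ((measurable_pi_iff.2 hYpopmeas).prodMk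
      hWpopmeas).aemeasurable (hident i)).comp ((measurable_pi_apply t).comp
        measurable_fst)).symm.memLp_snd (hY2 t)
  have hYbar' (t : Fin k) (z : 𝓩) :
      Ybar n t z = fun ω => stratMean (fun i : range n => Y i) (Φz ω) (ΦI ω) t z ω := by
    funext ω
    rw [hYbar, hNtz]
    simp_rw [hYobs]
    exact sum_ite_div_card_eq_stratMean _ _ _ _ _ _ _
  let D : (range n → 𝓩) × (range n → Fin k) → 𝓩 → Ω → ℝ := fun p z ω =>
    stratMean (fun i : range n => Y i) p.1 p.2 tt z ω
      - stratMean (fun i : range n => Y i) p.1 p.2 ss z ω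
  have hD (z : 𝓩) (ω : Ω) : Ybar n tt z ω - Ybar n ss z ω = D (Φz ω, ΦI ω) z ω := by
    simp only [hYbar', D]
  have hMeanL2 := memLp_stratMean_comp (fun i : range n => hYmeas i)
    (fun i : range n => hYL2 i) hΦz hΦI
  have hDL2 (z : 𝓩) : MemLp (fun ω => D (Φz ω, ΦI ω) z ω) 2 P :=
    (hMeanL2 tt z).sub (hMeanL2 ss z)
  have hYX (i : range n) (t : Fin k) :
      Measurable[MeasurableSpace.comap (X i) inferInstance] (Y i t) :=
    ((measurable_pi_apply t).comp measurable_fst).comp (comap_measurable (X i))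
  have hDX (c : range n → 𝓩) (b : range n → Fin k) (z : 𝓩) :=
    (measurable_stratMean hYX c b tt z).sub (measurable_stratMean hYX c b ss z)
  simp only [hD]
  rw [h𝒟 n, h𝒢n, hσIn, ← MeasurableSpace.comap_prodMk]
  refine condExp_comap_mul_ae_eq_of_forall_integral_cond (f := fun p => D p z)
    (g := fun p => D p z') (hΦz.prodMk hΦI) ((hDL2 z).integrable one_le_two)
    ((hDL2 z').integrable one_le_two) ((hDL2 z).integrable_mul (hDL2 z')) ?_
  rintro ⟨c, b⟩ hcb
  rw [← Set.singleton_prod_singleton, Set.mk_preimage_prod] at hcb ⊢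
  refine integral_mul_cond_preimage_inter_eq (X := fun i : range n => X i)
    (hindep.precomp Subtype.val_injective) (fun i => hXm i) (hg.comp measurable_snd)
    (fun ω i => hZdef i ω)
    (hΦI (measurableSet_singleton b)) (fun s hs => ?_) hcb
    (S := {i | c i = z}) (T := {i | c i = z'})
    (Set.disjoint_left.2 fun _ h1 h2 => hzz' (h1.symm.trans h2))
    (hDX c b z) (hDX c b z')
  rw [← h𝒢n]
  exact hC2 n _ s (by rw [hσIn]; exact ⟨{b}, measurableSet_singleton b, rfl⟩)
    (by rwa [hσYW, iSup_subtype'])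

/-- Under (C1)–(C3), for every fixed `n` and distinct strata `z ≠ z'`,
the conditional covariance of `Ȳ_t(z) − Ȳ_s(z)` and `Ȳ_t(z') − Ȳ_s(z')` given
`𝒟ₙ = σ(Z₁,…,Zₙ,I₁,…,Iₙ)` vanishes almost surely. -/
theorem stmt13 {Ω : Type*} [MeasurableSpace Ω] (P : Measure Ω) [IsProbabilityMeasure P]
    {𝓦 : Type*} [MeasurableSpace 𝓦]
    {𝓩 : Type*} [Fintype 𝓩] [DecidableEq 𝓩] [MeasurableSpace 𝓩] [MeasurableSingletonClass 𝓩]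
    {k : ℕ} (hk : 2 ≤ k)
    (π : Fin k → ℝ) (hπ : ∀ t, π t ∈ Set.Ioo (0 : ℝ) 1) (hπsum : ∑ t, π t = 1)
    -- (C1): the i.i.d. sequence and its population version
    (Y : ℕ → Fin k → Ω → ℝ) (W : ℕ → Ω → 𝓦)
    (Ypop : Fin k → Ω → ℝ) (Wpop : Ω → 𝓦)
    (hYmeas : ∀ i t, Measurable (Y i t)) (hWmeas : ∀ i, Measurable (W i))
    (hYpopmeas : ∀ t, Measurable (Ypop t)) (hWpopmeas : Measurable Wpop)
    (hident : ∀ i, Measure.map (fun ω => ((fun t => Y i t ω), W i ω)) P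
        = Measure.map (fun ω => ((fun t => Ypop t ω), Wpop ω)) P)
    (hindep : iIndepFun
        (fun i ω => ((fun t => Y i t ω), W i ω)) P)
    (hY2 : ∀ t, MemLp (Ypop t) 2 P)
    -- strata
    (g : 𝓦 → 𝓩) (hg : Measurable g)
    (Z : ℕ → Ω → 𝓩) (hZdef : ∀ i ω, Z i ω = g (W i ω))
    (Zpop : Ω → 𝓩) (hZpopdef : ∀ ω, Zpop ω = g (Wpop ω))
    (hZpos : ∀ z, 0 < P {ω | Zpop ω = z})
    -- treatment assignments and observed responses
    (I : ℕ → Ω → Fin k) (hImeas : ∀ i, Measurable (I i))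
    (Yobs : ℕ → Ω → ℝ) (hYobs : ∀ i ω, Yobs i ω = Y i (I i ω) ω)
    -- stratum/treatment counts
    (Nz : ℕ → 𝓩 → Ω → ℕ)
    (hNz : ∀ n z ω, Nz n z ω = ((range n).filter fun i => Z i ω = z).card)
    (Ntz : ℕ → Fin k → 𝓩 → Ω → ℕ)
    (hNtz : ∀ n t z ω,
      Ntz n t z ω = ((range n).filter fun i => I i ω = t ∧ Z i ω = z).card)
    -- σ-algebras generated by the strata, the assignments, and the raw data
    (𝒢 σI σYW : ℕ → MeasurableSpace Ω)
    (h𝒢 : ∀ n, 𝒢 n = ⨆ i ∈ range n, MeasurableSpace.comap (Z i) inferInstance)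
    (hσI : ∀ n, σI n = ⨆ i ∈ range n, MeasurableSpace.comap (I i) inferInstance)
    (hσYW : ∀ n, σYW n = ⨆ i ∈ range n,
        MeasurableSpace.comap (fun ω => ((fun t => Y i t ω), W i ω)) inferInstance)
    -- (C2): conditional independence of assignments and data given the strata
    (hC2 : ∀ n (A B : Set Ω), MeasurableSet[σI n] A → MeasurableSet[σYW n] B →
        MeasureTheory.condExp (𝒢 n) P ((A ∩ B).indicator fun _ => (1 : ℝ))
          =ᵐ[P] fun ω =>
            MeasureTheory.condExp (𝒢 n) P (A.indicator fun _ => (1 : ℝ)) ω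
              * MeasureTheory.condExp (𝒢 n) P (B.indicator fun _ => (1 : ℝ)) ω)
    -- (C3): conditional assignment probabilities and vanishing relative imbalance
    (hC3a : ∀ n, ∀ i < n, ∀ t,
        MeasureTheory.condExp (𝒢 n) P ({ω | I i ω = t}.indicator fun _ => (1 : ℝ))
          =ᵐ[P] fun _ => π t)
    -- the two fixed treatments and the average treatment effect
    (tt ss : Fin k) (hts : tt ≠ ss)
    (θ : ℝ) (hθ : θ = ∫ ω, (Ypop tt ω - Ypop ss ω) ∂P)
    -- stratified sample means and the stratified estimator
    (Ybar : ℕ → Fin k → 𝓩 → Ω → ℝ)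
    (hYbar : ∀ n t z ω, Ybar n t z ω
      = (∑ i ∈ range n, if I i ω = t ∧ Z i ω = z then Yobs i ω else 0)
          / (Ntz n t z ω : ℝ))
    -- the σ-algebra generated by strata and assignments
    (𝒟 : ℕ → MeasurableSpace Ω) (h𝒟 : ∀ n, 𝒟 n = 𝒢 n ⊔ σI n) :
    ∀ n : ℕ, ∀ z z' : 𝓩, z ≠ z' →
      MeasureTheory.condExp (𝒟 n) P
          (fun ω => (Ybar n tt z ω - Ybar n ss z ω) * (Ybar n tt z' ω - Ybar n ss z' ω))
        =ᵐ[P] fun ω =>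
          MeasureTheory.condExp (𝒟 n) P (fun ω' => Ybar n tt z ω' - Ybar n ss z ω') ω
            * MeasureTheory.condExp (𝒟 n) P
                (fun ω' => Ybar n tt z' ω' - Ybar n ss z' ω') ω :=
  stmt13_general P Y W Ypop Wpop hYmeas hWmeas hYpopmeas hWpopmeas hident hindep hY2 g hg Z hZdef I
    hImeas Yobs hYobs Ntz hNtz 𝒢 σI σYW h𝒢 hσI hσYW hC2 tt ss Ybar hYbar 𝒟 h𝒟
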